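/- arXiv:2201.12821 — 11 statements merged into one kernel-verified Lean document; each statement's English description precedes it below -/
import Mathlib

section
/- Let m, n, a, b ≥ 2 be integers with a and b both dividing gcd(m,n), and b > a. Then the multinomial coefficient C((m+n)/a; m/a, n/a) is strictly greater than C((m+n)/b; m/b, n/b). -/
/-!
Since `a < b` and `a ∣ m`, we have `m/b < m/a` and `n/b ≤ n/a`, while `(m+n)/b = m/b + n/b` and
`m/a + n/a ≤ (m+n)/a`. So it suffices that `(k + j).choose k` grows strictly with `k` once `j ≥ 1`
(by Pascal's rule the increment is `(k + j).choose (k + 1) > 0`) and weakly with the top argument.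
-/

namespace Nat

theorem choose_add_left_strictMono {j : ℕ} (hj : 0 < j) :
    StrictMono fun k => (k + j).choose k := by
  refine strictMono_nat_of_lt_succ fun k => ?_
  have hpos : 0 < (k + j).choose (k + 1) := choose_pos (by omega)
  show (k + j).choose k < (k + 1 + j).choose (k + 1)
  rw [show k + 1 + j = k + j + 1 by omega, choose_succ_succ']
  omega

theorem div_lt_div_of_dvd_of_lt {m a b : ℕ} (hm : 0 < m) (ha : 0 < a) (ham : a ∣ m)
    (hab : a < b) : m / b < m / a := by
  obtain ⟨k, rfl⟩ := ham
  have hk : 0 < k := Nat.pos_of_mul_pos_left hm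
  rw [Nat.mul_div_cancel_left k ha, div_lt_iff_lt_mul (by omega)]
  exact mul_comm k b ▸ Nat.mul_lt_mul_of_pos_right hab hk

end Nat

theorem stmt_0_general (m n a b : ℕ) (hm : 2 ≤ m) (hn : 2 ≤ n) (ha : 2 ≤ a)
    (ham : a ∣ m) (hbm : b ∣ m) (hbn : b ∣ n) (hab : a < b) :
    Nat.choose ((m + n) / b) (m / b) < Nat.choose ((m + n) / a) (m / a) := by
  have hnb : 0 < n / b := Nat.div_pos (Nat.le_of_dvd (by omega) hbn) (by omega)
  have hmab : m / b < m / a := Nat.div_lt_div_of_dvd_of_lt (by omega) (by omega) ham hab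
  calc ((m + n) / b).choose (m / b)
      = (m / b + n / b).choose (m / b) := by rw [Nat.add_div_of_dvd_right hbm]
    _ < (m / a + n / b).choose (m / a) := Nat.choose_add_left_strictMono hnb hmab
    _ ≤ (m / a + n / a).choose (m / a) :=
        Nat.choose_le_choose _ (Nat.add_le_add_left (Nat.div_le_div_left hab.le (by omega)) _)
    _ ≤ ((m + n) / a).choose (m / a) := Nat.choose_le_choose _ Nat.div_add_div_le_add_div

theorem stmt_0 (m n a b : ℕ) (hm : 2 ≤ m) (hn : 2 ≤ n) (ha : 2 ≤ a) (hb : 2 ≤ b)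
    (ham : a ∣ m) (han : a ∣ n) (hbm : b ∣ m) (hbn : b ∣ n) (hab : a < b) :
    Nat.choose ((m + n) / b) (m / b) < Nat.choose ((m + n) / a) (m / a) :=
  stmt_0_general m n a b hm hn ha ham hbm hbn hab
end

section
/- Let m, n, a, b ≥ 2 be integers with a and b dividing gcd(m,n), and b > a. Then C((m+n)/a; m/a) / C((m+n)/b; m/b) ≥ (1 + m/n)^(n(1/a - 1/b)) · (1 + (a/b)(n/m))^(m(1/a - 1/b)), i.e., C((m+n)/a; m/a) ≥ (1 + m/n)^(n/a - n/b) · (1 + (a n)/(b m))^(m/a - m/b) · C((m+n)/b; m/b) as real numbers. -/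
lemma gen_choose (M : ℕ) (r : ℝ) (hr : 0 ≤ r) :
    ∀ d N' : ℕ, (∀ k : ℕ, N' < k → k ≤ N' + d → r * k ≤ M + k) →
    r ^ d * (Nat.choose (M + N') N' : ℝ) ≤ (Nat.choose (M + (N' + d)) (N' + d) : ℝ) := by
  intro d
  induction d with
  | zero => intro N' _; simp
  | succ d ih =>
    intro N' h
    have key : ((M + N' + 1 : ℕ) : ℝ) * (Nat.choose (M + N') N' : ℝ)
        = (Nat.choose (M + N' + 1) (N' + 1) : ℝ) * ((N' + 1 : ℕ) : ℝ) := by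
      exact_mod_cast congrArg (Nat.cast (R := ℝ)) (Nat.add_one_mul_choose_eq (M + N') N')
    have hC : (0 : ℝ) ≤ (Nat.choose (M + N') N' : ℝ) := Nat.cast_nonneg _
    have h1 : r * ((N' + 1 : ℕ) : ℝ) ≤ (M : ℝ) + ((N' + 1 : ℕ) : ℝ) :=
      h (N' + 1) (Nat.lt_succ_self _) (by omega)
    have hpos : (0 : ℝ) < ((N' + 1 : ℕ) : ℝ) := by positivity
    have step : r * (Nat.choose (M + N') N' : ℝ) ≤ (Nat.choose (M + (N' + 1)) (N' + 1) : ℝ) := by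
      have h2 : r * (Nat.choose (M + N') N' : ℝ) * ((N' + 1 : ℕ) : ℝ)
          ≤ (Nat.choose (M + (N' + 1)) (N' + 1) : ℝ) * ((N' + 1 : ℕ) : ℝ) := by
        calc r * (Nat.choose (M + N') N' : ℝ) * ((N' + 1 : ℕ) : ℝ)
            = r * ((N' + 1 : ℕ) : ℝ) * (Nat.choose (M + N') N' : ℝ) := by ring
          _ ≤ ((M : ℝ) + ((N' + 1 : ℕ) : ℝ)) * (Nat.choose (M + N') N' : ℝ) :=
              mul_le_mul_of_nonneg_right h1 hC
          _ = ((M + N' + 1 : ℕ) : ℝ) * (Nat.choose (M + N') N' : ℝ) := by push_cast; ring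
          _ = (Nat.choose (M + N' + 1) (N' + 1) : ℝ) * ((N' + 1 : ℕ) : ℝ) := key
          _ = (Nat.choose (M + (N' + 1)) (N' + 1) : ℝ) * ((N' + 1 : ℕ) : ℝ) := by
              rw [Nat.add_assoc]
      exact le_of_mul_le_mul_right h2 hpos
    have ih' := ih (N' + 1) (fun k hk1 hk2 => h k (by omega) (by omega))
    calc r ^ (d + 1) * (Nat.choose (M + N') N' : ℝ)
        = r ^ d * (r * (Nat.choose (M + N') N' : ℝ)) := by ring
      _ ≤ r ^ d * (Nat.choose (M + (N' + 1)) (N' + 1) : ℝ) :=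
          mul_le_mul_of_nonneg_left step (pow_nonneg hr d)
      _ ≤ (Nat.choose (M + (N' + 1 + d)) (N' + 1 + d) : ℝ) := ih'
      _ = (Nat.choose (M + (N' + (d + 1))) (N' + (d + 1)) : ℝ) := by ring_nf

theorem stmt_1 (m n a b : ℕ) (hm : 2 ≤ m) (hn : 2 ≤ n) (ha : 2 ≤ a) (hb : 2 ≤ b)
    (ham : a ∣ m) (han : a ∣ n) (hbm : b ∣ m) (hbn : b ∣ n) (hab : a < b) :
    (1 + (m : ℝ) / n) ^ (n / a - n / b) * (1 + ((a : ℝ) * n) / ((b : ℝ) * m)) ^ (m / a - m / b) *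
      (Nat.choose ((m + n) / b) (m / b) : ℝ) ≤ (Nat.choose ((m + n) / a) (m / a) : ℝ) := by
  have hm0 : (0:ℝ) < m := by positivity
  have hn0 : (0:ℝ) < n := by exact_mod_cast by omega
  have ha0 : (0:ℝ) < a := by exact_mod_cast by omega
  have hb0 : (0:ℝ) < b := by exact_mod_cast by omega
  have hmn : n / b ≤ n / a := Nat.div_le_div_left (le_of_lt hab) (by omega)
  have hmm : m / b ≤ m / a := Nat.div_le_div_left (le_of_lt hab) (by omega)
  set e1 := n / a - n / b with he1
  set e2 := m / a - m / b with he2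
  have hne : n / b + e1 = n / a := by omega
  have hme : m / b + e2 = m / a := by omega
  -- real cast facts
  have cma : ((m / a : ℕ) : ℝ) = (m : ℝ) / a := Nat.cast_div ham (ne_of_gt ha0)
  have cmb : ((m / b : ℕ) : ℝ) = (m : ℝ) / b := Nat.cast_div hbm (ne_of_gt hb0)
  have cna : ((n / a : ℕ) : ℝ) = (n : ℝ) / a := Nat.cast_div han (ne_of_gt ha0)
  have cnb : ((n / b : ℕ) : ℝ) = (n : ℝ) / b := Nat.cast_div hbn (ne_of_gt hb0)
  set r1 : ℝ := 1 + (m : ℝ) / n with hr1def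
  set r2 : ℝ := 1 + ((a : ℝ) * n) / ((b : ℝ) * m) with hr2def
  have hr1 : (0:ℝ) ≤ r1 := by positivity
  have hr2 : (0:ℝ) ≤ r2 := by positivity
  -- hypothesis for first application (increase n-part from n/b to n/a, M = m/a)
  have hyp1 : ∀ k : ℕ, n / b < k → k ≤ n / b + e1 → r1 * k ≤ ((m / a : ℕ) : ℝ) + k := by
    intro k _ hk2
    rw [hne] at hk2
    have hka : (a * k : ℕ) ≤ n := by
      calc a * k ≤ a * (n / a) := Nat.mul_le_mul_left a hk2
        _ = n := Nat.mul_div_cancel' han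
    have hka' : (a : ℝ) * k ≤ n := by exact_mod_cast hka
    rw [cma, hr1def, ← sub_nonneg]
    have heq : (m:ℝ)/a + k - (1 + (m:ℝ)/n) * k = ((m:ℝ)*n - (m:ℝ)*((a:ℝ)*k)) / ((a:ℝ)*n) := by
      field_simp; ring
    rw [heq]
    apply div_nonneg _ (by positivity)
    nlinarith [hka', hm0]
  have hyp2 : ∀ k : ℕ, m / b < k → k ≤ m / b + e2 → r2 * k ≤ ((n / b : ℕ) : ℝ) + k := by
    intro k _ hk2
    rw [hme] at hk2
    have hka : (a * k : ℕ) ≤ m := by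
      calc a * k ≤ a * (m / a) := Nat.mul_le_mul_left a hk2
        _ = m := Nat.mul_div_cancel' ham
    have hka' : (a : ℝ) * k ≤ m := by exact_mod_cast hka
    rw [cnb, hr2def]
    have hbm0 : (0:ℝ) < (b:ℝ) * m := by positivity
    rw [add_mul, one_mul, div_mul_eq_mul_div, ← sub_nonneg]
    have : (n:ℝ)/b + k - (k + (a:ℝ)*n*k/((b:ℝ)*m)) = ((n:ℝ)*m - (a:ℝ)*n*k)/((b:ℝ)*m) := by
      field_simp; ring
    rw [this]
    apply div_nonneg _ (le_of_lt hbm0)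
    nlinarith [hka', hn0]
  have H1 := gen_choose (m / a) r1 hr1 e1 (n / b) hyp1
  have H2 := gen_choose (n / b) r2 hr2 e2 (m / b) hyp2
  rw [hne] at H1
  rw [hme] at H2
  -- index rewrites
  have i1 : (m + n) / a = m / a + n / a := Nat.add_div_of_dvd_right ham
  have i2 : (m + n) / b = m / b + n / b := Nat.add_div_of_dvd_right hbm
  have i3 : Nat.choose ((m + n) / a) (m / a) = Nat.choose (m / a + n / a) (n / a) := by
    rw [i1, Nat.choose_symm_add]
  have i4 : Nat.choose ((m + n) / b) (m / b) = Nat.choose (n / b + m / b) (m / b) := by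
    rw [i2, add_comm (m/b) (n/b)]
  have i5 : Nat.choose (n / b + m / a) (m / a) = Nat.choose (m / a + n / b) (n / b) := by
    rw [add_comm (n/b) (m/a), Nat.choose_symm_add]
  rw [i3, i4]
  calc r1 ^ e1 * r2 ^ e2 * (Nat.choose (n / b + m / b) (m / b) : ℝ)
      = r1 ^ e1 * (r2 ^ e2 * (Nat.choose (n / b + m / b) (m / b) : ℝ)) := by ring
    _ ≤ r1 ^ e1 * (Nat.choose (n / b + m / a) (m / a) : ℝ) :=
        mul_le_mul_of_nonneg_left H2 (pow_nonneg hr1 e1)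
    _ = r1 ^ e1 * (Nat.choose (m / a + n / b) (n / b) : ℝ) := by rw [i5]
    _ ≤ (Nat.choose (m / a + n / a) (n / a) : ℝ) := H1
end

section
/- Let m, n, a, b ≥ 2 be integers with a and b dividing gcd(m,n), and b ≥ 2a. Then a · C((m+n)/a; m/a) > max(m, n) · C((m+n)/b; m/b). -/
-- monotone on first half
lemma half_mono (n : ℕ) : ∀ k j : ℕ, j ≤ k → 2*k ≤ n → Nat.choose n j ≤ Nat.choose n k := by
  intro k
  induction k with
  | zero => intro j hj _; interval_cases j; rfl
  | succ k ih =>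
    intro j hj hk
    rcases Nat.eq_or_lt_of_le hj with h | h
    · subst h; rfl
    · have h1 : j ≤ k := by omega
      have h2 : 2*k ≤ n := by omega
      refine (ih j h1 h2).trans ?_
      exact Nat.choose_le_succ_of_lt_half_left (by omega)

lemma aux_mono (n n' k k' : ℕ) (hn : n' ≤ n) (hk' : k' ≤ n') (hk : k ≤ n)
    (h1 : min k' (n' - k') ≤ k) (h2 : min k' (n' - k') ≤ n - k) :
    Nat.choose n' k' ≤ Nat.choose n k := by
  set j := min k' (n' - k') with hj
  have e1 : Nat.choose n' k' = Nat.choose n' j := by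
    rcases le_total k' (n' - k') with h | h
    · rw [hj, min_eq_left h]
    · rw [hj, min_eq_right h]; exact (Nat.choose_symm hk').symm
  rw [e1]
  have step1 : Nat.choose n' j ≤ Nat.choose n j := Nat.choose_le_choose j hn
  refine step1.trans ?_
  rcases le_or_gt (2*k) n with h | h
  · exact half_mono n k j h1 h
  · rw [← Nat.choose_symm hk]
    exact half_mono n (n-k) j h2 (by omega)

lemma edge_case (s : ℕ) (hs : 2 ≤ s) : (2*s - 2) * s < Nat.choose (2*s) 2 := by
  obtain ⟨k, rfl⟩ : ∃ k, s = k + 2 := ⟨s - 2, by omega⟩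
  have h : Nat.choose (2*(k+2)) 2 = (k+2) * (2*k+3) := by
    rw [Nat.choose_two_right, show 2*(k+2)-1 = 2*k+3 by omega,
      show 2*(k+2)*(2*k+3) = ((k+2)*(2*k+3))*2 by ring, Nat.mul_div_cancel _ (by norm_num)]
  rw [h, show 2*(k+2)-2 = 2*k+2 by omega]
  nlinarith

lemma Bp : ∀ s : ℕ, ∀ t : ℕ, 1 ≤ t → t < s → (2*s - 2) * Nat.choose s t < Nat.choose (2*s) (2*t) := by
  intro s
  induction s using Nat.strong_induction_on with
  | _ s ih =>
    intro t ht hts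
    have hs : 2 ≤ s := by omega
    by_cases h1 : t = 1
    · subst h1
      simpa using edge_case s hs
    · by_cases h2 : t + 1 = s
      · -- t = s - 1, symmetric to t = 1
        have e1 : Nat.choose s t = s := by
          have : Nat.choose s t = Nat.choose s (s - t) := (Nat.choose_symm (by omega)).symm
          rw [this, show s - t = 1 by omega, Nat.choose_one_right]
        have e2 : Nat.choose (2*s) (2*t) = Nat.choose (2*s) 2 := by
          have : Nat.choose (2*s) (2*t) = Nat.choose (2*s) (2*s - 2*t) :=
            (Nat.choose_symm (by omega)).symm
          rw [this, show 2*s - 2*t = 2 by omega]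
        rw [e1, e2]; exact edge_case s hs
      · -- middle: 2 ≤ t ≤ s - 2
        obtain ⟨u, rfl⟩ : ∃ u, s = u + 1 := ⟨s - 1, by omega⟩
        obtain ⟨r, rfl⟩ : ∃ r, t = r + 1 := ⟨t - 1, by omega⟩
        have hr : 1 ≤ r := by omega
        have hru : r + 1 < u := by omega
        have hu : 3 ≤ u := by omega
        have IH1 := ih u (by omega) r hr (by omega)
        have IH2 := ih u (by omega) (r+1) (by omega) hru
        -- claim A : C(u+1, r+1) ≤ C(2u, 2r+1)
        have hA : Nat.choose (u+1) (r+1) ≤ Nat.choose (2*u) (2*r+1) := by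
          apply aux_mono (2*u) (u+1) (2*r+1) (r+1) (by omega) (by omega) (by omega)
          · exact le_trans (min_le_left _ _) (by omega)
          · exact le_trans (min_le_right _ _) (by omega)
        have pascal : Nat.choose (2*(u+1)) (2*(r+1)) =
            Nat.choose (2*u) (2*r) + 2 * Nat.choose (2*u) (2*r+1) + Nat.choose (2*u) (2*r+2) := by
          rw [show 2*(u+1) = (2*u+1)+1 by ring, show 2*(r+1) = (2*r+1)+1 by ring,
            Nat.choose_succ_succ, show 2*u+1 = (2*u)+1 by rfl, show 2*r+1 = (2*r)+1 by rfl,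
            Nat.choose_succ_succ, Nat.choose_succ_succ]
          ring
        have pascal2 : Nat.choose (u+1) (r+1) = Nat.choose u r + Nat.choose u (r+1) :=
          Nat.choose_succ_succ u r
        rw [pascal, pascal2]
        have e3 : 2*(u+1) - 2 = 2*u := by omega
        rw [e3]
        rw [pascal2] at hA
        have e4 : 2*u - 2 = 2*(u-1) := by omega
        rw [e4] at IH1 IH2
        obtain ⟨v, rfl⟩ : ∃ v, u = v + 1 := ⟨u - 1, by omega⟩
        simp only [Nat.add_sub_cancel] at IH1 IH2
        rw [show 2*(r+1) = 2*r+2 by ring] at IH2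
        nlinarith [IH1, IH2, hA]

-- grow q
lemma keyP (p' q' : ℕ) (hp' : 1 ≤ p') (hq' : 1 ≤ q') :
    ∀ q : ℕ, 2*q' ≤ q →
      (2*p' + q - 2) * Nat.choose (p'+q') p' < Nat.choose (2*p'+q) (2*p') := by
  intro q hq
  induction q, hq using Nat.le_induction with
  | base =>
    have := Bp (p'+q') p' hp' (by omega)
    have e : 2*(p'+q') = 2*p' + 2*q' := by ring
    have e2 : 2*(p'+q') - 2 = 2*p' + 2*q' - 2 := by omega
    rw [e2, e] at this
    exact this
  | succ q hq ihq =>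
    have hq2 : 2*q' ≤ q := hq
    have hstep : Nat.choose (p'+q') p' ≤ Nat.choose (2*p'+q) (2*p'-1) := by
      apply aux_mono (2*p'+q) (p'+q') (2*p'-1) p' (by omega) (by omega) (by omega)
      · exact le_trans (min_le_left _ _) (by omega)
      · exact le_trans (min_le_right _ _) (by omega)
    have pascal : Nat.choose (2*p'+(q+1)) (2*p') =
        Nat.choose (2*p'+q) (2*p'-1) + Nat.choose (2*p'+q) (2*p') := by
      rw [show 2*p'+(q+1) = (2*p'+q)+1 by ring, show 2*p' = (2*p'-1)+1 by omega,
        Nat.choose_succ_succ]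
      simp
    rw [pascal]
    have e : 2*p' + (q+1) - 2 = (2*p' + q - 2) + 1 := by omega
    rw [e, add_mul, one_mul]
    linarith [ihq, hstep]

-- grow p
lemma key (p' q' : ℕ) (hp' : 1 ≤ p') (hq' : 1 ≤ q') :
    ∀ p : ℕ, 2*p' ≤ p → ∀ q : ℕ, 2*q' ≤ q →
      (p + q - 2) * Nat.choose (p'+q') p' < Nat.choose (p+q) p := by
  intro p hp
  induction p, hp using Nat.le_induction with
  | base => intro q hq; exact keyP p' q' hp' hq' q hq
  | succ p hp ihp =>
    intro q hq
    have hstep : Nat.choose (p'+q') p' ≤ Nat.choose (p+q) (p+1) := by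
      apply aux_mono (p+q) (p'+q') (p+1) p' (by omega) (by omega) (by omega)
      · exact le_trans (min_le_left _ _) (by omega)
      · exact le_trans (min_le_right _ _) (by omega)
    have pascal : Nat.choose ((p+1)+q) (p+1) = Nat.choose (p+q) p + Nat.choose (p+q) (p+1) := by
      rw [show (p+1)+q = (p+q)+1 by ring, Nat.choose_succ_succ]
    rw [pascal]
    have e : (p+1) + q - 2 = (p + q - 2) + 1 := by omega
    rw [e, add_mul, one_mul]
    linarith [ihp q hq, hstep]

theorem stmt_2 (m n a b : ℕ) (hm : 2 ≤ m) (hn : 2 ≤ n) (ha : 2 ≤ a) (hb : 2 ≤ b)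
    (ham : a ∣ Nat.gcd m n) (hbm : b ∣ Nat.gcd m n) (hab : 2 * a ≤ b) :
    max m n * Nat.choose ((m + n) / b) (m / b) < a * Nat.choose ((m + n) / a) (m / a) := by
  have ham1 : a ∣ m := ham.trans (Nat.gcd_dvd_left m n)
  have ham2 : a ∣ n := ham.trans (Nat.gcd_dvd_right m n)
  have hbm1 : b ∣ m := hbm.trans (Nat.gcd_dvd_left m n)
  have hbm2 : b ∣ n := hbm.trans (Nat.gcd_dvd_right m n)
  obtain ⟨p, hp⟩ := ham1
  obtain ⟨q, hq⟩ := ham2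
  obtain ⟨p', hp'⟩ := hbm1
  obtain ⟨q', hq'⟩ := hbm2
  have ha0 : 0 < a := by omega
  have hb0 : 0 < b := by omega
  have hp'1 : 1 ≤ p' := by
    rcases Nat.eq_zero_or_pos p' with h | h
    · subst h; simp at hp'; omega
    · exact h
  have hq'1 : 1 ≤ q' := by
    rcases Nat.eq_zero_or_pos q' with h | h
    · subst h; simp at hq'; omega
    · exact h
  have hpp : 2*p' ≤ p := by
    have : a * (2*p') ≤ a * p := by
      calc a * (2*p') = (2*a)*p' := by ring
        _ ≤ b * p' := Nat.mul_le_mul_right p' hab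
        _ = a * p := by omega
    exact Nat.le_of_mul_le_mul_left this ha0
  have hqq : 2*q' ≤ q := by
    have : a * (2*q') ≤ a * q := by
      calc a * (2*q') = (2*a)*q' := by ring
        _ ≤ b * q' := Nat.mul_le_mul_right q' hab
        _ = a * q := by omega
    exact Nat.le_of_mul_le_mul_left this ha0
  have e1 : (m + n) / a = p + q := by
    rw [hp, hq, ← Nat.mul_add, Nat.mul_div_cancel_left _ ha0]
  have e2 : m / a = p := by rw [hp, Nat.mul_div_cancel_left _ ha0]
  have e3 : (m + n) / b = p' + q' := by
    rw [hp', hq', ← Nat.mul_add, Nat.mul_div_cancel_left _ hb0]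
  have e4 : m / b = p' := by rw [hp', Nat.mul_div_cancel_left _ hb0]
  rw [e1, e2, e3, e4]
  have hkey := key p' q' hp'1 hq'1 p hpp q hqq
  have hmax : max m n ≤ a * (p + q - 2) := by
    have hbm' : b ≤ m := Nat.le_of_dvd (show 0 < m by omega) ⟨p', hp'⟩
    have hbn' : b ≤ n := Nat.le_of_dvd (show 0 < n by omega) ⟨q', hq'⟩
    have hp2 : 2 ≤ p := by omega
    have hq2 : 2 ≤ q := by omega
    obtain ⟨d, hd⟩ : ∃ d, p + q = d + 2 := ⟨p + q - 2, by omega⟩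
    have h5 : m + n = a*d + 2*a := by rw [hp, hq, show a*p + a*q = a*(p+q) by ring, hd]; ring
    have h6 : a * (p + q - 2) = a * d := by rw [show p + q - 2 = d by omega]
    omega
  calc max m n * Nat.choose (p'+q') p' ≤ a * (p+q-2) * Nat.choose (p'+q') p' :=
        Nat.mul_le_mul_right _ hmax
    _ = a * ((p+q-2) * Nat.choose (p'+q') p') := by ring
    _ < a * Nat.choose (p+q) p := by
        exact Nat.mul_lt_mul_of_le_of_lt (le_refl a) hkey ha0
end

section
/- Let G and H be finite abelian groups with coprime orders. Then the number of zero-sum multisets of length |H| over G equals (1/(|G|+|H|)) · C(|G|+|H|; |G|), the rational Catalan number. -/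
/-!
Translating a multiset of size `m` by `g` shifts its sum by `m • g`, and `m • ·` is a bijection
of `G` when `m` is coprime to `|G|`. Hence `G × {zero-sum multisets of size m}` is in bijection
with all multisets of size `m`, so `|G| · numZeroSum G m = C(|G| + m - 1, m)`, which equals
`|G| / (|G| + m) · C(|G| + m, |G|)`.
-/

/-- The number of zero-sum multisets of size `m` over `G`. -/
noncomputable def numZeroSum (G : Type*) [AddCommGroup G] (m : ℕ) : ℕ :=
  Nat.card {S : Multiset G // Multiset.card S = m ∧ S.sum = 0}

/-- The number of elements of order `d` in `G`. -/
noncomputable def phiOrd (G : Type*) [AddGroup G] (d : ℕ) : ℕ :=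
  Nat.card {g : G // addOrderOf g = d}

namespace Multiset

variable {G : Type*} [AddCommGroup G]

theorem sum_map_add_const (S : Multiset G) (g : G) :
    (S.map (· + g)).sum = S.sum + card S • g := by
  rw [sum_map_add, map_id', map_const', sum_replicate]

theorem sum_map_sub_const (S : Multiset G) (g : G) :
    (S.map (· - g)).sum = S.sum - card S • g := by
  rw [sum_map_sub, map_id', map_const', sum_replicate]

end Multiset

section ZeroSum

variable {G : Type*} [AddCommGroup G] {m : ℕ}

noncomputable def translateZeroSumEquiv (hm : (Nat.card G).Coprime m) :
    G × {S : Multiset G // Multiset.card S = m ∧ S.sum = 0} ≃ Sym G m where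
  toFun p := ⟨p.2.1.map (· + p.1), by rw [Multiset.card_map, p.2.2.1]⟩
  invFun T :=
    let g := (nsmulCoprime hm).symm T.1.sum
    (g, ⟨T.1.map (· - g), by rw [Multiset.card_map, T.2],
      by rw [Multiset.sum_map_sub_const, T.2, ← nsmulCoprime_apply hm, Equiv.apply_symm_apply,
        sub_self]⟩)
  left_inv := by
    rintro ⟨g, S, hcard, hsum⟩
    have hg : (nsmulCoprime hm).symm (S.map (· + g)).sum = g := by
      rw [Equiv.symm_apply_eq, nsmulCoprime_apply, Multiset.sum_map_add_const, hcard, hsum,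
        zero_add]
    ext1
    · exact hg
    · simp only [hg, Multiset.map_map, Function.comp_def, add_sub_cancel_right, Multiset.map_id']
  right_inv T := by
    ext1
    simp [Multiset.map_map]

theorem card_mul_numZeroSum [Fintype G] (hm : (Fintype.card G).Coprime m) :
    Fintype.card G * numZeroSum G m = (Fintype.card G + m - 1).choose m := by
  classical
  rw [← Nat.card_eq_fintype_card] at hm
  have := Nat.card_congr (translateZeroSumEquiv hm)
  rwa [Nat.card_prod, Nat.card_eq_fintype_card (α := Sym G m), Sym.card_sym_eq_choose,
    Nat.card_eq_fintype_card] at this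

end ZeroSum

theorem Nat.add_mul_choose_pred {n : ℕ} (hn : 0 < n) (m : ℕ) :
    (n + m) * (n + m - 1).choose m = n * (n + m).choose n := by
  obtain ⟨k, rfl⟩ : ∃ k, n = k + 1 := ⟨n - 1, by omega⟩
  rw [show k + 1 + m - 1 = k + m by omega, ← Nat.choose_symm_add, Nat.add_right_comm,
    Nat.add_one_mul_choose_eq, mul_comm]

theorem stmt_5 (G H : Type*) [AddCommGroup G] [Fintype G] [AddCommGroup H] [Fintype H]
    (h : Nat.Coprime (Fintype.card G) (Fintype.card H)) :
    (numZeroSum G (Fintype.card H) : ℚ) = (1 / (Fintype.card G + Fintype.card H : ℚ)) *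
      (Nat.choose (Fintype.card G + Fintype.card H) (Fintype.card G) : ℚ) := by
  have hG : 0 < Fintype.card G := Fintype.card_pos
  have hcount : (Fintype.card G + Fintype.card H : ℚ) * numZeroSum G (Fintype.card H) =
      (Fintype.card G + Fintype.card H).choose (Fintype.card G) := by
    have := Nat.add_mul_choose_pred hG (Fintype.card H)
    rw [← card_mul_numZeroSum h, mul_left_comm, Nat.mul_right_inj hG.ne'] at this
    exact_mod_cast this
  rw [← hcount]
  field_simp
end

section
/- Let G and H be finite abelian groups of orders n and m respectively. Suppose the set E_G = {d : d | gcd(n,m) and φ_G(d) > φ_H(d)} is nonempty. Then the minimum element of E_G is a prime power. -/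
lemma phiOrd_one (G : Type*) [AddGroup G] : phiOrd G 1 = 1 := by
  unfold phiOrd
  rw [Nat.card_eq_one_iff_unique]
  constructor
  · constructor
    intro x y
    ext
    rw [AddMonoid.addOrderOf_eq_one_iff.mp x.2, AddMonoid.addOrderOf_eq_one_iff.mp y.2]
  · exact ⟨0, addOrderOf_zero⟩

lemma phiOrd_mul (G : Type*) [AddCommGroup G] [Fintype G] {b c : ℕ}
    (hb : 0 < b) (hc : 0 < c) (h : Nat.Coprime b c) :
    phiOrd G (b * c) = phiOrd G b * phiOrd G c := by
  classical
  have key : Function.Bijective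
      (fun p : {x : G // addOrderOf x = b} × {y : G // addOrderOf y = c} =>
        (⟨p.1.1 + p.2.1, by
          have := (AddCommute.all p.1.1 p.2.1).addOrderOf_add_eq_mul_addOrderOf_of_coprime
            (by rw [p.1.2, p.2.2]; exact h)
          rw [this, p.1.2, p.2.2]⟩ : {g : G // addOrderOf g = b * c})) := by
    constructor
    · rintro ⟨⟨x, hx⟩, ⟨y, hy⟩⟩ ⟨⟨x', hx'⟩, ⟨y', hy'⟩⟩ hxy
      simp only [Subtype.mk.injEq] at hxy
      have hd : x - x' = y' - y := by rw [sub_eq_sub_iff_add_eq_add, add_comm y' x']; exact hxy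
      have h1 : addOrderOf (x - x') ∣ b := by
        apply addOrderOf_dvd_of_nsmul_eq_zero
        rw [smul_sub, ← hx, addOrderOf_nsmul_eq_zero x, hx, ← hx',
          addOrderOf_nsmul_eq_zero x', sub_zero]
      have h2 : addOrderOf (x - x') ∣ c := by
        rw [hd]
        apply addOrderOf_dvd_of_nsmul_eq_zero
        rw [smul_sub, ← hy', addOrderOf_nsmul_eq_zero y', hy', ← hy,
          addOrderOf_nsmul_eq_zero y, sub_zero]
      have : addOrderOf (x - x') = 1 := Nat.eq_one_of_dvd_coprimes h h1 h2
      have hxx : x = x' := by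
        have h0 := AddMonoid.addOrderOf_eq_one_iff.mp this
        exact sub_eq_zero.mp h0
      have hyy : y = y' := by
        have h0 := AddMonoid.addOrderOf_eq_one_iff.mp (hd ▸ this)
        exact (sub_eq_zero.mp h0).symm
      simp [hxx, hyy]
    · rintro ⟨g, hg⟩
      obtain ⟨u, v, huv⟩ := (Nat.isCoprime_iff_coprime.mpr h)
      set x : G := (v * c) • g with hxdef
      set y : G := (u * b) • g with hydef
      have hbc0 : ((b * c : ℕ) : ℤ) • g = 0 := by
        rw [natCast_zsmul]
        rw [← hg]; exact addOrderOf_nsmul_eq_zero g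
      have hxy : x + y = g := by
        rw [hxdef, hydef, ← add_zsmul]
        have : v * c + u * b = 1 := by linarith [huv]
        rw [this, one_zsmul]
      have hxb : addOrderOf x ∣ b := by
        apply addOrderOf_dvd_of_nsmul_eq_zero
        rw [hxdef, ← natCast_zsmul, ← mul_zsmul]
        have : (b : ℤ) * (v * c) = v * ((b * c : ℕ) : ℤ) := by push_cast; ring
        rw [this, mul_zsmul, hbc0, smul_zero]
      have hyc : addOrderOf y ∣ c := by
        apply addOrderOf_dvd_of_nsmul_eq_zero
        rw [hydef, ← natCast_zsmul, ← mul_zsmul]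
        have : (c : ℤ) * (u * b) = u * ((b * c : ℕ) : ℤ) := by push_cast; ring
        rw [this, mul_zsmul, hbc0, smul_zero]
      have hco : (addOrderOf x).Coprime (addOrderOf y) :=
        Nat.Coprime.coprime_dvd_right hyc (Nat.Coprime.coprime_dvd_left hxb h)
      have hmn : addOrderOf x * addOrderOf y = b * c := by
        rw [← (AddCommute.all x y).addOrderOf_add_eq_mul_addOrderOf_of_coprime hco, hxy, hg]
      have hxpos : 0 < addOrderOf x := addOrderOf_pos x
      have hypos : 0 < addOrderOf y := addOrderOf_pos y
      have hxle : addOrderOf x ≤ b := Nat.le_of_dvd hb hxb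
      have hyle : addOrderOf y ≤ c := Nat.le_of_dvd hc hyc
      have hxeq : addOrderOf x = b := by nlinarith
      have hyeq : addOrderOf y = c := by nlinarith
      exact ⟨⟨⟨x, hxeq⟩, ⟨y, hyeq⟩⟩, by simp [hxy]⟩
  unfold phiOrd
  rw [← Nat.card_eq_of_bijective _ key, Nat.card_prod]

theorem stmt_7 (G H : Type*) [AddCommGroup G] [Fintype G] [AddCommGroup H] [Fintype H]
    (a : ℕ) (ha : a ∣ Nat.gcd (Fintype.card G) (Fintype.card H))
    (haGH : phiOrd H a < phiOrd G a)
    (hmin : ∀ d : ℕ, d ∣ Nat.gcd (Fintype.card G) (Fintype.card H) →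
      phiOrd H d < phiOrd G d → a ≤ d) :
    IsPrimePow a := by
  by_contra hnp
  have hgcdpos : 0 < Nat.gcd (Fintype.card G) (Fintype.card H) :=
    Nat.gcd_pos_of_pos_left _ Fintype.card_pos
  have ha0 : 0 < a := Nat.pos_of_dvd_of_pos ha hgcdpos
  have ha1 : a ≠ 1 := by
    rintro rfl
    rw [phiOrd_one, phiOrd_one] at haGH
    exact lt_irrefl _ haGH
  have ha1' : 1 < a := lt_of_le_of_ne ha0 (Ne.symm ha1)
  set p := a.minFac with hp
  have hpp : p.Prime := Nat.minFac_prime ha1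
  set b := p ^ a.factorization p with hbdef
  set c := a / b with hcdef
  have hbdvd : b ∣ a := Nat.ordProj_dvd a p
  have habc : b * c = a := Nat.ordProj_mul_ordCompl_eq_self a p
  have hcop : Nat.Coprime b c :=
    Nat.Coprime.pow_left _ (Nat.coprime_ordCompl hpp ha0.ne')
  have hk1 : 1 ≤ a.factorization p := by
    rw [← Nat.Prime.dvd_iff_one_le_factorization hpp ha0.ne']
    exact Nat.minFac_dvd a
  have hb1 : 1 < b := by
    calc 1 < p := hpp.one_lt
    _ ≤ p ^ a.factorization p := Nat.le_self_pow (by omega) p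
  have hc1 : 1 < c := by
    rcases Nat.lt_or_ge c 2 with hclt | hcge
    · interval_cases c
      · omega
      · exfalso; apply hnp
        exact ⟨p, a.factorization p, hpp.prime, hk1, by omega⟩
    · omega
  have hblt : b < a := by nlinarith
  have hclt : c < a := by nlinarith
  have hcdvd : c ∣ a := ⟨b, by rw [← habc, mul_comm]⟩
  have hbG := hmin b (hbdvd.trans ha)
  have hcG := hmin c (hcdvd.trans ha)
  have hble : phiOrd G b ≤ phiOrd H b := by
    by_contra hcon
    exact absurd (hbG (lt_of_not_ge hcon)) (by omega)
  have hcle : phiOrd G c ≤ phiOrd H c := by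
    by_contra hcon
    exact absurd (hcG (lt_of_not_ge hcon)) (by omega)
  have hmulG : phiOrd G a = phiOrd G b * phiOrd G c := by
    rw [← habc]; exact phiOrd_mul G (by omega) (by omega) hcop
  have hmulH : phiOrd H a = phiOrd H b * phiOrd H c := by
    rw [← habc]; exact phiOrd_mul H (by omega) (by omega) hcop
  rw [hmulG, hmulH] at haGH
  exact absurd haGH (not_lt.mpr (Nat.mul_le_mul hble hcle))
end

section
/- Let G and H be finite abelian groups of orders n and m, q a prime with n = q^β n', m = q^δ m' where q ∤ n'm'. Let E = {k ≥ 1 : q^k | gcd(m,n) and φ_G(q^k) ≠ φ_H(q^k)} be nonempty with minimum t. If φ_G(q^t) < φ_H(q^t), then q^{t+1} divides m, and moreover q^t ≤ φ_H(q^t) − φ_G(q^t) ≤ q^δ − q^t. -/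
/-!
Write `N_G(d)` (`ordDvdCount G d`) for the number of elements of `G` of order dividing `d`,
so that `φ_G(q^(k+1)) = N_G(q^(k+1)) - N_G(q^k)`. By minimality of `t`, `N_G` and `N_H` agree
at `q^(t-1)`, hence `φ_H(q^t) > φ_G(q^t)` forces `N_H(q^t) > N_G(q^t)`. Both are orders of
`q^t`-torsion subgroups, so by Cauchy they are powers `q^β > q^α` with `q^β ∣ |H|`, and
`q^α ≥ q^t` because (Sylow) `G` has a subgroup of order `q^t`. Then `q^(t+1) ∣ q^β ∣ |H|`
and `q^t ≤ q^α ≤ q^β - q^α ≤ q^δ - q^t`.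
-/

noncomputable def ordDvdCount (G : Type*) [AddGroup G] (n : ℕ) : ℕ :=
  Nat.card {g : G // addOrderOf g ∣ n}

section AddGroup

variable {G H : Type*} [AddGroup G] [AddGroup H]

lemma ordDvdCount_one : ordDvdCount G 1 = 1 := by
  simp [ordDvdCount]

lemma phiOrd_add_ordDvdCount [Finite G] {q : ℕ} (hq : q.Prime) (k : ℕ) :
    phiOrd G (q ^ (k + 1)) + ordDvdCount G (q ^ k) = ordDvdCount G (q ^ (k + 1)) := by
  classical
  have := Fintype.ofFinite G
  have hsplit (g : G) : addOrderOf g ∣ q ^ (k + 1) ↔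
      addOrderOf g = q ^ (k + 1) ∨ addOrderOf g ∣ q ^ k := by
    rw [Nat.dvd_prime_pow hq, Nat.dvd_prime_pow hq]
    constructor
    · rintro ⟨i, hi, h⟩
      rcases hi.eq_or_lt with rfl | hi
      · exact .inl h
      · exact .inr ⟨i, by omega, h⟩
    · rintro (h | ⟨i, hi, h⟩)
      · exact ⟨k + 1, le_rfl, h⟩
      · exact ⟨i, by omega, h⟩
  have hdisj (g : G) (h : addOrderOf g = q ^ (k + 1)) : ¬ addOrderOf g ∣ q ^ k := fun hdvd =>
    ((Nat.pow_dvd_pow_iff_le_right hq.one_lt).mp (h ▸ hdvd)).not_gt (Nat.lt_succ_self k)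
  simp only [phiOrd, ordDvdCount, Nat.card_eq_fintype_card, Fintype.card_subtype, hsplit,
    Finset.filter_or]
  exact (Finset.card_union_of_disjoint (Finset.disjoint_filter.mpr fun g _ => hdisj g)).symm

lemma ordDvdCount_prime_pow_eq_of_phiOrd_eq [Finite G] [Finite H] {q : ℕ} (hq : q.Prime) {s : ℕ}
    (h : ∀ k, 1 ≤ k → k ≤ s → phiOrd G (q ^ k) = phiOrd H (q ^ k)) :
    ordDvdCount G (q ^ s) = ordDvdCount H (q ^ s) := by
  induction s with
  | zero => simp only [pow_zero, ordDvdCount_one]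
  | succ s ih =>
    rw [← phiOrd_add_ordDvdCount hq, ← phiOrd_add_ordDvdCount hq,
      h (s + 1) le_add_self le_rfl, ih fun k hk hks => h k hk (by omega)]

end AddGroup

open scoped AddSubgroup

section AddCommGroup

variable {G : Type*} [AddCommGroup G]

lemma ordDvdCount_eq_card_torsionBy (n : ℕ) : ordDvdCount G n = Nat.card G[n] :=
  Nat.card_congr <| Equiv.subtypeEquivRight fun _ =>
    (AddSubgroup.torsionBy.nsmul_iff.trans addOrderOf_dvd_iff_nsmul_eq_zero.symm).symm

lemma exists_ordDvdCount_prime_pow_eq [Finite G] {q : ℕ} (hq : q.Prime) (k : ℕ) :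
    ∃ e, ordDvdCount G (q ^ k) = q ^ e ∧ q ^ e ∣ Nat.card G := by
  have : Fact q.Prime := ⟨hq⟩
  rw [ordDvdCount_eq_card_torsionBy]
  -- `G[(q ^ k : ℕ)]` rather than `G[q ^ k]`, which would elaborate to the index `(q : ℤ) ^ k`.
  suffices hpow :
      Nat.card G[(q ^ k : ℕ)] = q ^ (Nat.card G[(q ^ k : ℕ)]).primeFactorsList.length from
    ⟨_, hpow, hpow ▸ AddSubgroup.card_addSubgroup_dvd_card _⟩
  refine Nat.eq_prime_pow_of_unique_prime_dvd Nat.card_pos.ne' fun {r} hr hrd => ?_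
  have : Fact r.Prime := ⟨hr⟩
  obtain ⟨x, hx⟩ := exists_prime_addOrderOf_dvd_card' r hrd
  have : r ∣ q ^ k := hx ▸ addOrderOf_dvd_of_nsmul_eq_zero (AddSubgroup.torsionBy.nsmul x)
  exact (Nat.prime_dvd_prime_iff_eq hr hq).mp (hr.dvd_of_dvd_pow this)

lemma prime_pow_le_ordDvdCount [Finite G] {q k : ℕ} (hq : q.Prime) (h : q ^ k ∣ Nat.card G) :
    q ^ k ≤ ordDvdCount G (q ^ k) := by
  have : Fact q.Prime := ⟨hq⟩
  obtain ⟨K, hK⟩ := Sylow.exists_subgroup_card_pow_prime (G := Multiplicative G) q (n := k) h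
  have hle : Subgroup.toAddSubgroup' K ≤ G[(q ^ k : ℕ)] := fun a ha => by
    rw [AddSubgroup.torsionBy.nsmul_iff, ← addOrderOf_dvd_iff_nsmul_eq_zero,
      ← orderOf_ofAdd_eq_addOrderOf, ← hK]
    exact Subgroup.orderOf_dvd_natCard K ha
  calc q ^ k = Nat.card (Subgroup.toAddSubgroup' K) := hK.symm
    _ ≤ ordDvdCount G (q ^ k) := by
      rw [ordDvdCount_eq_card_torsionBy]; exact AddSubgroup.card_le_of_le hle

end AddCommGroup

lemma Nat.pow_le_pow_sub_pow_of_lt {q a b : ℕ} (hq : 2 ≤ q) (h : a < b) :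
    q ^ a ≤ q ^ b - q ^ a := by
  have : q ^ a * q ≤ q ^ b := pow_succ q a ▸ Nat.pow_le_pow_right (by omega) h
  have : q ^ a * 2 ≤ q ^ a * q := Nat.mul_le_mul_left _ hq
  omega

theorem stmt_9_general (G H : Type*) [AddCommGroup G] [Fintype G] [AddCommGroup H] [Fintype H]
    (q : ℕ) (hq : q.Prime) (t : ℕ) (ht : 1 ≤ t)
    (htdvd : q ^ t ∣ Nat.gcd (Fintype.card H) (Fintype.card G))
    (hmin : ∀ k : ℕ, 1 ≤ k → q ^ k ∣ Nat.gcd (Fintype.card H) (Fintype.card G) →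
      phiOrd G (q ^ k) ≠ phiOrd H (q ^ k) → t ≤ k)
    (hlt : phiOrd G (q ^ t) < phiOrd H (q ^ t)) :
    q ^ (t + 1) ∣ Fintype.card H ∧
      q ^ t ≤ phiOrd H (q ^ t) - phiOrd G (q ^ t) ∧
      phiOrd H (q ^ t) - phiOrd G (q ^ t) ≤
        q ^ ((Fintype.card H).factorization q) - q ^ t := by
  simp only [← Nat.card_eq_fintype_card] at *
  obtain ⟨s, rfl⟩ := Nat.exists_eq_add_of_le' ht
  have hbelow : ordDvdCount G (q ^ s) = ordDvdCount H (q ^ s) :=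
    ordDvdCount_prime_pow_eq_of_phiOrd_eq hq fun k hk hks => by
      by_contra hne
      have := hmin k hk ((pow_dvd_pow q (by omega)).trans htdvd) hne
      omega
  obtain ⟨α, hα, -⟩ := exists_ordDvdCount_prime_pow_eq (G := G) hq (s + 1)
  obtain ⟨β, hβ, hβdvd⟩ := exists_ordDvdCount_prime_pow_eq (G := H) hq (s + 1)
  have hG := phiOrd_add_ordDvdCount (G := G) hq s
  have hH := phiOrd_add_ordDvdCount (G := H) hq s
  have htα : s + 1 ≤ α := (pow_le_pow_iff_right₀ hq.one_lt).mp <|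
    hα ▸ prime_pow_le_ordDvdCount hq (htdvd.trans (Nat.gcd_dvd_right _ _))
  have hαβ : α < β := (pow_lt_pow_iff_right₀ hq.one_lt).mp (by omega)
  have hβδ : β ≤ (Nat.card H).factorization q :=
    (hq.pow_dvd_iff_le_factorization Nat.card_pos.ne').mp hβdvd
  have hdiff : phiOrd H (q ^ (s + 1)) - phiOrd G (q ^ (s + 1)) = q ^ β - q ^ α := by omega
  refine ⟨(pow_dvd_pow q (by omega)).trans hβdvd, ?_, ?_⟩
  · rw [hdiff]
    exact (Nat.pow_le_pow_right hq.pos htα).trans (Nat.pow_le_pow_sub_pow_of_lt hq.two_le hαβ)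
  · have := Nat.pow_le_pow_right hq.pos htα
    have := Nat.pow_le_pow_right hq.pos hβδ
    omega

theorem stmt_9 (G H : Type*) [AddCommGroup G] [Fintype G] [AddCommGroup H] [Fintype H]
    (q : ℕ) (hq : q.Prime) (t : ℕ) (ht : 1 ≤ t)
    (htdvd : q ^ t ∣ Nat.gcd (Fintype.card H) (Fintype.card G))
    (hne : phiOrd G (q ^ t) ≠ phiOrd H (q ^ t))
    (hmin : ∀ k : ℕ, 1 ≤ k → q ^ k ∣ Nat.gcd (Fintype.card H) (Fintype.card G) →
      phiOrd G (q ^ k) ≠ phiOrd H (q ^ k) → t ≤ k)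
    (hlt : phiOrd G (q ^ t) < phiOrd H (q ^ t)) :
    q ^ (t + 1) ∣ Fintype.card H ∧
      q ^ t ≤ phiOrd H (q ^ t) - phiOrd G (q ^ t) ∧
      phiOrd H (q ^ t) - phiOrd G (q ^ t) ≤
        q ^ ((Fintype.card H).factorization q) - q ^ t :=
  stmt_9_general G H q hq t ht htdvd hmin hlt
end

section
/- Let G and H be finite abelian groups of orders n and m, p a prime with p-adic valuations α = v_p(n), γ = v_p(m). Let E = {k ≥ 1 : p^k | gcd(m,n), φ_G(p^k) ≠ φ_H(p^k)} be nonempty with minimum s. Assume s ≥ 2, p^{s+1} | gcd(m,n), φ_G(p^s) > φ_H(p^s), and φ_G(p^{s+1}) < φ_H(p^{s+1}). Then α ≥ s+2 and γ ≥ s+2. -/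
section Aux

variable (G : Type*) [AddCommGroup G]

/-- The homomorphism `x ↦ n • x`. -/
def smulHomAux (n : ℕ) : G →+ G :=
  AddMonoidHom.mk' (fun x => n • x) fun a b => smul_add n a b

/-- The subgroup of elements killed by `n`. -/
def omAux (n : ℕ) : AddSubgroup G := (smulHomAux G n).ker

lemma mem_omAux {n : ℕ} {x : G} : x ∈ omAux G n ↔ n • x = 0 := Iff.rfl

/-- `tAux p k` : the subgroup `(p^k G) ∩ G[p]`. -/
def tAux (p k : ℕ) : AddSubgroup G := (smulHomAux G (p ^ k)).range ⊓ omAux G p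

lemma card_omAux_one : Nat.card (omAux G 1) = 1 := by
  have : omAux G 1 = ⊥ := by
    ext x; simp [mem_omAux, AddSubgroup.mem_bot]
  rw [this]; simp

variable [Fintype G]

lemma card_omAux_succ (p k : ℕ) :
    Nat.card (omAux G (p ^ (k + 1))) = Nat.card (omAux G (p ^ k)) * Nat.card (tAux G p k) := by
  classical
  set f : (omAux G (p ^ (k + 1))) →+ G :=
    (smulHomAux G (p ^ k)).comp (omAux G (p ^ (k + 1))).subtype with hf
  have h1 : Nat.card (omAux G (p ^ (k + 1))) =
      Nat.card ((omAux G (p ^ (k + 1))) ⧸ f.ker) * Nat.card f.ker :=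
    AddSubgroup.card_eq_card_quotient_mul_card_addSubgroup _
  have h2 : Nat.card ((omAux G (p ^ (k + 1))) ⧸ f.ker) = Nat.card f.range :=
    Nat.card_congr (QuotientAddGroup.quotientKerEquivRange f).toEquiv
  have h3 : Nat.card f.ker = Nat.card (omAux G (p ^ k)) := by
    apply Nat.card_congr
    refine ⟨fun x => ⟨x.1.1, x.2⟩, fun y => ⟨⟨y.1, ?_⟩, ?_⟩, fun x => rfl, fun y => rfl⟩
    · show p ^ (k + 1) • (y.1 : G) = 0
      rw [pow_succ', mul_smul, show p ^ k • (y.1 : G) = 0 from y.2, smul_zero]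
    · exact y.2
  have h4 : f.range = tAux G p k := by
    ext y
    constructor
    · rintro ⟨x, rfl⟩
      refine ⟨⟨x.1, rfl⟩, ?_⟩
      show p • (p ^ k • (x.1 : G)) = 0
      rw [← mul_smul, ← pow_succ']
      exact x.2
    · rintro ⟨⟨z, rfl⟩, hy⟩
      have hz : z ∈ omAux G (p ^ (k + 1)) := by
        show p ^ (k + 1) • z = 0
        rw [pow_succ', mul_smul]
        exact hy
      exact ⟨⟨z, hz⟩, rfl⟩
  rw [h1, h2, h4, h3, mul_comm]

lemma tAux_antitone (p k : ℕ) : tAux G p (k + 1) ≤ tAux G p k := by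
  refine inf_le_inf_right _ ?_
  rintro y ⟨x, rfl⟩
  exact ⟨p • x, by show p ^ k • p • x = p ^ (k+1) • x; rw [← mul_smul, ← pow_succ]⟩

lemma card_tAux_antitone (p k : ℕ) : Nat.card (tAux G p (k + 1)) ≤ Nat.card (tAux G p k) :=
  AddSubgroup.card_le_of_le (tAux_antitone G p k)

variable {p : ℕ} (hp : p.Prime)
include hp

lemma card_pow_of_subgroup (S : AddSubgroup G) (h : ∀ x ∈ S, ∃ m : ℕ, p ^ m • x = 0) :
    ∃ a : ℕ, Nat.card S = p ^ a := by
  haveI : Fact p.Prime := ⟨hp⟩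
  have hPG : IsPGroup p (Multiplicative S) := by
    intro g
    obtain ⟨m, hm⟩ := h g.toAdd.1 g.toAdd.2
    exact ⟨m, by
      apply Multiplicative.toAdd.injective
      rw [toAdd_pow]
      exact Subtype.ext hm⟩
  obtain ⟨n, hn⟩ := IsPGroup.iff_card.mp hPG
  exact ⟨n, by rw [← Nat.card_congr Multiplicative.toAdd, hn]⟩

lemma card_omAux_pow (k : ℕ) : ∃ a : ℕ, Nat.card (omAux G (p ^ k)) = p ^ a :=
  card_pow_of_subgroup G hp _ fun x hx => ⟨k, hx⟩

lemma card_tAux_pow (k : ℕ) : ∃ a : ℕ, Nat.card (tAux G p k) = p ^ a :=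
  card_pow_of_subgroup G hp _ fun x hx => ⟨1, by rw [pow_one]; exact hx.2⟩

lemma card_omAux_dvd (k : ℕ) : Nat.card (omAux G (p ^ k)) ∣ Fintype.card G := by
  rw [← Nat.card_eq_fintype_card]
  exact AddSubgroup.card_addSubgroup_dvd_card _

lemma card_omAux_phi (k : ℕ) :
    Nat.card (omAux G (p ^ (k + 1))) =
      Nat.card (omAux G (p ^ k)) + phiOrd G (p ^ (k + 1)) := by
  classical
  have e1 : Nat.card (omAux G (p ^ (k + 1))) =
      Nat.card {x : G // addOrderOf x ∣ p ^ k ∨ addOrderOf x = p ^ (k + 1)} := by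
    apply Nat.card_congr
    apply Equiv.subtypeEquivRight
    intro x
    rw [mem_omAux, ← addOrderOf_dvd_iff_nsmul_eq_zero]
    constructor
    · intro hdvd
      rcases (Nat.dvd_prime_pow hp).mp hdvd with ⟨j, hj, hx⟩
      rcases Nat.lt_or_ge j (k + 1) with hlt | hge
      · exact Or.inl (hx ▸ pow_dvd_pow p (Nat.lt_succ_iff.mp hlt))
      · exact Or.inr (by rw [hx, Nat.le_antisymm hj hge])
    · rintro (h | h)
      · exact h.trans (pow_dvd_pow p k.le_succ)
      · exact h ▸ dvd_rfl
  have hdisj : Disjoint (fun x : G => addOrderOf x ∣ p ^ k) (fun x => addOrderOf x = p ^ (k + 1)) := by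
    intro q hq1 hq2 x hx
    have h1 : addOrderOf x ∣ p ^ k := hq1 x hx
    have h2 : addOrderOf x = p ^ (k + 1) := hq2 x hx
    exfalso
    rw [h2] at h1
    have hle := Nat.le_of_dvd (pow_pos hp.pos k) h1
    exact Nat.lt_irrefl _ (lt_of_le_of_lt hle (Nat.pow_lt_pow_right hp.one_lt (Nat.lt_succ_self k)))
  rw [e1, Nat.card_congr (subtypeOrEquiv _ _ hdisj), Nat.card_sum]
  congr 1
  apply Nat.card_congr
  apply Equiv.subtypeEquivRight
  intro x
  rw [mem_omAux, ← addOrderOf_dvd_iff_nsmul_eq_zero]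

end Aux

lemma conclude_factorization (G : Type*) [AddCommGroup G] [Fintype G] {p : ℕ} (hp : p.Prime)
    {c k : ℕ} (hc : ∃ a, c = p ^ a) (hdvd : c ∣ Fintype.card G) (hle : p ^ k ≤ c) :
    k ≤ (Fintype.card G).factorization p := by
  obtain ⟨a, rfl⟩ := hc
  have hk : k ≤ a := (Nat.pow_le_pow_iff_right hp.one_lt).mp hle
  haveI : Nonempty G := ⟨0⟩
  exact (hp.pow_dvd_iff_le_factorization Fintype.card_ne_zero).mp
    ((pow_dvd_pow p hk).trans hdvd)

theorem stmt_11 (G H : Type*) [AddCommGroup G] [Fintype G] [AddCommGroup H] [Fintype H]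
    (p : ℕ) (hp : p.Prime) (s : ℕ) (hs : 2 ≤ s)
    (hsdvd : p ^ s ∣ Nat.gcd (Fintype.card H) (Fintype.card G))
    (hmin : ∀ k : ℕ, 1 ≤ k → p ^ k ∣ Nat.gcd (Fintype.card H) (Fintype.card G) →
      phiOrd G (p ^ k) ≠ phiOrd H (p ^ k) → s ≤ k)
    (hs1dvd : p ^ (s + 1) ∣ Nat.gcd (Fintype.card H) (Fintype.card G))
    (hgt : phiOrd H (p ^ s) < phiOrd G (p ^ s))
    (hlt : phiOrd G (p ^ (s + 1)) < phiOrd H (p ^ (s + 1))) :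
    s + 2 ≤ (Fintype.card G).factorization p ∧ s + 2 ≤ (Fintype.card H).factorization p := by
  obtain ⟨s', rfl⟩ : ∃ s', s = s' + 2 := ⟨s - 2, by omega⟩
  clear hs hs1dvd
  set N : ℕ → ℕ := fun k => Nat.card (omAux G (p ^ k)) with hNdef
  set M : ℕ → ℕ := fun k => Nat.card (omAux H (p ^ k)) with hMdef
  set tG : ℕ → ℕ := fun k => Nat.card (tAux G p k) with htGdef
  set tH : ℕ → ℕ := fun k => Nat.card (tAux H p k) with htHdef
  have hN0 : N 0 = 1 := by simp only [hNdef, pow_zero]; exact card_omAux_one G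
  have hM0 : M 0 = 1 := by simp only [hMdef, pow_zero]; exact card_omAux_one H
  have hNstep : ∀ k, N (k + 1) = N k * tG k := fun k => card_omAux_succ G p k
  have hMstep : ∀ k, M (k + 1) = M k * tH k := fun k => card_omAux_succ H p k
  have hNphi : ∀ k, N (k + 1) = N k + phiOrd G (p ^ (k + 1)) := fun k => card_omAux_phi G hp k
  have hMphi : ∀ k, M (k + 1) = M k + phiOrd H (p ^ (k + 1)) := fun k => card_omAux_phi H hp k
  have hNpos : ∀ k, 0 < N k := fun k => Nat.card_pos
  have hMpos : ∀ k, 0 < M k := fun k => Nat.card_pos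
  have hNpow : ∀ k, ∃ a, N k = p ^ a := fun k => card_omAux_pow G hp k
  have hMpow : ∀ k, ∃ a, M k = p ^ a := fun k => card_omAux_pow H hp k
  have htGpow : ∀ k, ∃ a, tG k = p ^ a := fun k => card_tAux_pow G hp k
  have htHpow : ∀ k, ∃ a, tH k = p ^ a := fun k => card_tAux_pow H hp k
  have htGanti : Antitone tG := antitone_nat_of_succ_le fun k => card_tAux_antitone G p k
  have htHanti : Antitone tH := antitone_nat_of_succ_le fun k => card_tAux_antitone H p k
  -- Equality below level s
  have hEq : ∀ k, k ≤ s' + 1 → N k = M k := by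
    intro k hk
    induction k with
    | zero => rw [hN0, hM0]
    | succ j ih =>
      have hphi : phiOrd G (p ^ (j + 1)) = phiOrd H (p ^ (j + 1)) := by
        by_contra hne
        have := hmin (j + 1) (by omega)
          ((pow_dvd_pow p (by omega : j + 1 ≤ s' + 2)).trans hsdvd) hne
        omega
      rw [hNphi j, hMphi j, ih (by omega), hphi]
  -- Step 2: N (s'+2) > M (s'+2)
  have hNM : M (s' + 2) < N (s' + 2) := by
    have h1 : N (s' + 2) = N (s' + 1) + phiOrd G (p ^ (s' + 2)) := hNphi (s' + 1)
    have h2 : M (s' + 2) = M (s' + 1) + phiOrd H (p ^ (s' + 2)) := hMphi (s' + 1)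
    have h3 := hEq (s' + 1) le_rfl
    omega
  -- Step 3: M (s'+3) > M (s'+2)
  have hM3 : M (s' + 2) < M (s' + 3) := by
    have h2 : M (s' + 3) = M (s' + 2) + phiOrd H (p ^ (s' + 2 + 1)) := hMphi (s' + 2)
    omega
  -- tH (s'+2) ≥ p
  have hu2 : p ≤ tH (s' + 2) := by
    have h1 : 1 < tH (s' + 2) := by
      rcases Nat.lt_or_ge 1 (tH (s' + 2)) with h | h
      · exact h
      · exfalso
        have := hMstep (s' + 2)
        nlinarith [hMpos (s' + 2)]
    obtain ⟨a, ha⟩ := htHpow (s' + 2)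
    have ha0 : a ≠ 0 := by rintro rfl; simp [ha] at h1
    rw [ha]
    exact Nat.le_self_pow ha0 p
  have hu1 : p ≤ tH (s' + 1) := le_trans hu2 (htHanti (by omega))
  -- p * M(s'+2) ≤ N(s'+2)
  have hNs : p * M (s' + 2) ≤ N (s' + 2) := by
    obtain ⟨a, ha⟩ := hMpow (s' + 2)
    obtain ⟨b, hb⟩ := hNpow (s' + 2)
    have hab : a < b := (Nat.pow_lt_pow_iff_right hp.one_lt).mp (by rw [← ha, ← hb]; exact hNM)
    calc p * M (s' + 2) = p ^ (a + 1) := by rw [ha, pow_succ']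
      _ ≤ p ^ b := Nat.pow_le_pow_right hp.one_lt.le (by omega)
      _ = N (s' + 2) := hb.symm
  -- tG (s'+1) ≥ p * p
  have htg : p * p ≤ tG (s' + 1) := by
    have key : N (s' + 1) * (p * p) ≤ N (s' + 1) * tG (s' + 1) := by
      calc N (s' + 1) * (p * p) = p * (N (s' + 1) * p) := by ring
        _ ≤ p * (M (s' + 1) * tH (s' + 1)) := by
            rw [hEq (s' + 1) le_rfl]
            exact Nat.mul_le_mul_left _ (Nat.mul_le_mul_left _ hu1)
        _ = p * M (s' + 2) := by rw [hMstep (s' + 1)]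
        _ ≤ N (s' + 2) := hNs
        _ = N (s' + 1) * tG (s' + 1) := hNstep (s' + 1)
    exact Nat.le_of_mul_le_mul_left key (hNpos (s' + 1))
  -- Lower bound on N k for k ≤ s'+2
  have hNlow : ∀ k, k ≤ s' + 2 → (p * p) ^ k ≤ N k := by
    intro k hk
    induction k with
    | zero => rw [hN0, pow_zero]
    | succ j ih =>
      have hj : (p * p) ^ j ≤ N j := ih (by omega)
      have hgj : p * p ≤ tG j := le_trans htg (htGanti (by omega : j ≤ s' + 1))
      calc (p * p) ^ (j + 1) = (p * p) ^ j * (p * p) := by rw [pow_succ]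
        _ ≤ N j * tG j := Nat.mul_le_mul hj hgj
        _ = N (j + 1) := (hNstep j).symm
  have hpp : ∀ k : ℕ, (p * p) ^ k = p ^ (2 * k) := by
    intro k
    rw [show p * p = p ^ 2 from (sq p).symm, ← pow_mul]
  constructor
  · -- G side
    refine conclude_factorization G hp (hNpow (s' + 2)) (card_omAux_dvd G hp (s' + 2)) ?_
    calc p ^ (s' + 2 + 2) ≤ p ^ (2 * (s' + 2)) :=
          Nat.pow_le_pow_right hp.one_lt.le (by omega)
      _ = (p * p) ^ (s' + 2) := (hpp _).symm
      _ ≤ N (s' + 2) := hNlow (s' + 2) le_rfl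
  · -- H side
    refine conclude_factorization H hp (hMpow (s' + 3)) (card_omAux_dvd H hp (s' + 3)) ?_
    have hM1 : p ^ (2 * (s' + 1)) ≤ M (s' + 1) := by
      rw [← hpp, ← hEq (s' + 1) le_rfl]
      exact hNlow (s' + 1) (by omega)
    calc p ^ (s' + 2 + 2) ≤ p ^ (2 * (s' + 1) + 1 + 1) :=
          Nat.pow_le_pow_right hp.one_lt.le (by omega)
      _ = p ^ (2 * (s' + 1)) * p * p := by rw [pow_succ, pow_succ]
      _ ≤ M (s' + 1) * tH (s' + 1) * tH (s' + 2) :=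
          Nat.mul_le_mul (Nat.mul_le_mul hM1 hu1) hu2
      _ = M (s' + 3) := by rw [← hMstep (s' + 1), ← hMstep (s' + 2)]
end

section
/- For every integer ℓ ≥ 1 and every prime p ≥ 5, with m = 2ℓp, we have C(ℓp + p; p) > m · C(2ℓ + 2; 2). -/
lemma choose_mono_right_aux (n : ℕ) (p : ℕ) (h5 : 5 ≤ p) (hh : p ≤ n / 2) :
    Nat.choose n 5 ≤ Nat.choose n p := by
  induction p, h5 using Nat.le_induction with
  | base => exact le_refl _
  | succ k hk ih =>
    have hk2 : k < n / 2 := by omega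
    exact (ih (by omega)).trans (Nat.choose_le_succ_of_lt_half_left hk2)

theorem stmt_15 (ℓ p : ℕ) (hℓ : 1 ≤ ℓ) (hp : p.Prime) (hp5 : 5 ≤ p) :
    2 * ℓ * p * Nat.choose (2 * ℓ + 2) 2 < Nat.choose (ℓ * p + p) p := by
  set n := ℓ * p + p with hn
  have hmono : Nat.choose n 5 ≤ Nat.choose n p :=
    choose_mono_right_aux n p hp5 (by
      have h1 : 1 * p ≤ ℓ * p := Nat.mul_le_mul_right p hℓ
      omega)
  have hC2' : Nat.choose (2 * ℓ + 2) 2 = (ℓ + 1) * (2 * ℓ + 1) := by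
    have he : 2 * ℓ + 2 - 1 = 2 * ℓ + 1 := rfl
    have h2 : (2 * ℓ + 2) * (2 * ℓ + 2 - 1) = 2 * ((ℓ + 1) * (2 * ℓ + 1)) := by rw [he]; ring
    rw [Nat.choose_two_right, h2, Nat.mul_div_cancel_left _ two_pos]
  rw [hC2']
  refine lt_of_lt_of_le ?_ hmono
  -- reduce to descFactorial
  have hd : 120 * Nat.choose n 5 = Nat.descFactorial n 5 := by
    rw [Nat.descFactorial_eq_factorial_mul_choose]
    norm_num [Nat.factorial]
  have hdf : Nat.descFactorial n 5 = (n - 4) * ((n - 3) * ((n - 2) * ((n - 1) * n))) := by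
    simp [Nat.descFactorial]
  have hn5 : 5 * ℓ + 5 ≤ n := by
    have h1 : (ℓ + 1) * 5 ≤ (ℓ + 1) * p := Nat.mul_le_mul_left _ hp5
    have h2 : (ℓ + 1) * p = ℓ * p + p := by ring
    have h3 : (ℓ + 1) * 5 = 5 * ℓ + 5 := by ring
    omega
  have key : 120 * (2 * ℓ * p * ((ℓ + 1) * (2 * ℓ + 1))) < Nat.descFactorial n 5 := by
    rw [hdf]
    have h1 : (5 * ℓ + 1) ≤ n - 4 := by omega
    have h2 : (5 * ℓ + 2) ≤ n - 3 := by omega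
    have h3 : (5 * ℓ + 3) ≤ n - 2 := by omega
    have h4 : (5 * ℓ + 4) ≤ n - 1 := by omega
    have hln : ℓ * p ≤ n := by omega
    have hpoly : 240 * ((ℓ + 1) * (2 * ℓ + 1)) < (5 * ℓ + 1) * ((5 * ℓ + 2) * ((5 * ℓ + 3) * (5 * ℓ + 4))) := by
      nlinarith [sq_nonneg ℓ, hℓ]
    calc 120 * (2 * ℓ * p * ((ℓ + 1) * (2 * ℓ + 1)))
        = (ℓ * p) * (240 * ((ℓ + 1) * (2 * ℓ + 1))) := by ring
      _ < n * ((5 * ℓ + 1) * ((5 * ℓ + 2) * ((5 * ℓ + 3) * (5 * ℓ + 4)))) := by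
          apply Nat.mul_lt_mul_of_le_of_lt hln hpoly (by omega)
      _ ≤ (n - 4) * ((n - 3) * ((n - 2) * ((n - 1) * n))) := by
          calc n * ((5 * ℓ + 1) * ((5 * ℓ + 2) * ((5 * ℓ + 3) * (5 * ℓ + 4))))
              = (5 * ℓ + 1) * ((5 * ℓ + 2) * ((5 * ℓ + 3) * ((5 * ℓ + 4) * n))) := by ring
            _ ≤ _ := by
                gcongr <;> omega
  omega
end

section
/- For every integer m ≥ 18 divisible by 6, we have 2 · C(m/2 + 6; 6) > m · C(m/3 + 4; 4). -/
theorem stmt_16 (m : ℕ) (hm : 18 ≤ m) (hdvd : 6 ∣ m) :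
    m * Nat.choose (m / 3 + 4) 4 < 2 * Nat.choose (m / 2 + 6) 6 := by
  obtain ⟨k, rfl⟩ := hdvd
  have hk : 3 ≤ k := by omega
  have h3 : 6 * k / 3 = 2 * k := by omega
  have h2 : 6 * k / 2 = 3 * k := by omega
  rw [h3, h2]
  have d4 : Nat.descFactorial (2 * k + 4) 4 = 24 * Nat.choose (2 * k + 4) 4 := by
    rw [Nat.descFactorial_eq_factorial_mul_choose]; norm_num [Nat.factorial]
  have d6 : Nat.descFactorial (3 * k + 6) 6 = 720 * Nat.choose (3 * k + 6) 6 := by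
    rw [Nat.descFactorial_eq_factorial_mul_choose]; norm_num [Nat.factorial]
  have e4 : Nat.descFactorial (2 * k + 4) 4 =
      (2*k+4)*((2*k+3)*((2*k+2)*(2*k+1))) := by
    simp [Nat.descFactorial]; ring
  have e6 : Nat.descFactorial (3 * k + 6) 6 =
      (3*k+6)*((3*k+5)*((3*k+4)*((3*k+3)*((3*k+2)*(3*k+1))))) := by
    simp [Nat.descFactorial]; ring
  have key : 30 * (6 * k * ((2*k+4)*((2*k+3)*((2*k+2)*(2*k+1))))) <
      2 * ((3*k+6)*((3*k+5)*((3*k+4)*((3*k+3)*((3*k+2)*(3*k+1)))))) := by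
    obtain ⟨j, rfl⟩ : ∃ j, k = 3 + j := ⟨k - 3, by omega⟩
    ring_nf
    nlinarith [j.zero_le, Nat.zero_le (j^2), Nat.zero_le (j^3), Nat.zero_le (j^4),
      Nat.zero_le (j^5), Nat.zero_le (j^6)]
  have h : 720 * (6 * k * Nat.choose (2 * k + 4) 4) <
      720 * (2 * Nat.choose (3 * k + 6) 6) := by
    have := key
    rw [← e4, ← e6, d4, d6] at this
    ring_nf at this ⊢
    linarith
  exact Nat.lt_of_mul_lt_mul_left h
end

section
/- Let m, n, a, b be positive integers with 2 ≤ a < b, a | gcd(m,n), b | gcd(m,n), n(1/a − 1/b) ≥ 2, and m ≥ n². Then C((m+n)/a; m/a) > m · C((m+n)/b; m/b). -/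
/-!
Write `A = m/a`, `α = n/a`, `B = m/b`, `β = n/b` and `k = α - β ≥ 2`, so the claim reads
`m · C(B+β, β) < C(A+α, α)`. The hypothesis `m ≥ n²` gives `B + β ≤ A`, hence
`β! · C(B+β, β) ≤ (B+β)^β ≤ A^β`, while `α! · C(A+α, α) ≥ (A+1)^α`.
Since `α! ≤ β! · α^k`, it remains to see `m · α^k < (A+1)^k`, which is `m · n^k ≤ m^k`
divided by `a^k`.
-/

open scoped Nat

namespace Nat

theorem factorial_le_factorial_mul_pow (x j : ℕ) : (x + j)! ≤ x ! * (x + j) ^ j := by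
  rw [← factorial_mul_descFactorial (le_add_left j x), Nat.add_sub_cancel]
  exact Nat.mul_le_mul_left _ (descFactorial_le_pow _ _)

theorem factorial_mul_choose_add_le_pow (B β : ℕ) :
    β ! * (B + β).choose β ≤ (B + β) ^ β := by
  rw [← descFactorial_eq_factorial_mul_choose]
  exact descFactorial_le_pow _ _

theorem pow_le_factorial_mul_choose_add (A α : ℕ) :
    (A + 1) ^ α ≤ α ! * (A + α).choose α := by
  rw [← descFactorial_eq_factorial_mul_choose]
  simpa [Nat.add_right_comm A α 1] using pow_sub_le_descFactorial (A + α) α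

theorem mul_choose_add_lt_choose_add {m A B β k : ℕ} (hBA : B + β ≤ A)
    (hm : m * (β + k) ^ k < (A + 1) ^ k) :
    m * (B + β).choose β < (A + (β + k)).choose (β + k) := by
  refine Nat.lt_of_mul_lt_mul_right (a := β ! * (β + k)!) ?_
  calc m * (B + β).choose β * (β ! * (β + k)!)
      = m * (β ! * (B + β).choose β) * (β + k)! := by ring
    _ ≤ m * A ^ β * (β ! * (β + k) ^ k) := by
      gcongr
      · exact (factorial_mul_choose_add_le_pow B β).trans (Nat.pow_le_pow_left hBA β)
      · exact factorial_le_factorial_mul_pow β k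
    _ = m * (β + k) ^ k * (A ^ β * β !) := by ring
    _ ≤ m * (β + k) ^ k * ((A + 1) ^ β * β !) := by
      gcongr
      exact Nat.le_succ A
    _ < (A + 1) ^ k * ((A + 1) ^ β * β !) := Nat.mul_lt_mul_of_pos_right hm (by positivity)
    _ = (A + 1) ^ (β + k) * β ! := by ring
    _ ≤ (β + k)! * (A + (β + k)).choose (β + k) * β ! := by
      gcongr
      exact pow_le_factorial_mul_choose_add A (β + k)
    _ = (A + (β + k)).choose (β + k) * (β ! * (β + k)!) := by ring

theorem mul_pow_le_pow_of_sq_le {m n k : ℕ} (hn : 0 < n) (hk : 2 ≤ k) (hmn : n ^ 2 ≤ m) :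
    m * n ^ k ≤ m ^ k :=
  calc m * n ^ k ≤ m * (n ^ 2) ^ (k - 1) := by
        rw [← Nat.pow_mul]
        exact Nat.mul_le_mul_left _ (Nat.pow_le_pow_right hn (by omega))
    _ ≤ m * m ^ (k - 1) := by gcongr
    _ = m ^ k := by rw [← _root_.pow_succ', Nat.sub_add_cancel (by omega)]

theorem mul_div_pow_le_div_pow {m n a k : ℕ} (ha : 0 < a) (ham : a ∣ m) (han : a ∣ n)
    (h : m * n ^ k ≤ m ^ k) : m * (n / a) ^ k ≤ (m / a) ^ k := by
  obtain ⟨A, rfl⟩ := ham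
  obtain ⟨α, rfl⟩ := han
  rw [Nat.mul_div_cancel_left _ ha, Nat.mul_div_cancel_left _ ha]
  refine Nat.le_of_mul_le_mul_left ?_ (Nat.pow_pos (n := k) ha)
  calc a ^ k * (a * A * α ^ k) = a * A * (a * α) ^ k := by ring
    _ ≤ (a * A) ^ k := h
    _ = a ^ k * A ^ k := Nat.mul_pow a A k

theorem add_div_le_div_of_sq_le {m n a b : ℕ} (ha : 0 < a) (han : a ≤ n) (hab : a < b)
    (hmn : n ^ 2 ≤ m) (hb : b ∣ m + n) : (m + n) / b ≤ m / a := by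
  have hn : a * n ≤ m := (Nat.mul_le_mul_right n han).trans (by simpa [sq] using hmn)
  rw [Nat.le_div_iff_mul_le ha]
  refine Nat.le_of_mul_le_mul_right ?_ (ha.trans hab)
  calc (m + n) / b * a * b = a * (m + n) := by
        rw [Nat.mul_right_comm, Nat.div_mul_cancel hb, mul_comm]
    _ = a * m + a * n := Nat.mul_add a m n
    _ ≤ (a + 1) * m := by rw [Nat.succ_mul]; exact Nat.add_le_add_left hn _
    _ ≤ m * b := by rw [Nat.mul_comm m]; exact Nat.mul_le_mul_right m hab

end Nat

theorem stmt_17_general (m n a b : ℕ) (hab : a < b)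
    (ham : a ∣ Nat.gcd m n) (hbm : b ∣ Nat.gcd m n)
    (hgap : 2 ≤ n / a - n / b) (hmn : n ^ 2 ≤ m) :
    m * Nat.choose ((m + n) / b) (m / b) < Nat.choose ((m + n) / a) (m / a) := by
  obtain ⟨ham, han⟩ := Nat.dvd_gcd_iff.mp ham
  obtain ⟨hbm, hbn⟩ := Nat.dvd_gcd_iff.mp hbm
  have ha : 0 < a := Nat.pos_of_ne_zero (by rintro rfl; simp at hgap)
  have h2a : 2 * a ≤ n := (Nat.le_div_iff_mul_le ha).mp (hgap.trans (Nat.sub_le _ _))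
  have hBA : (m + n) / b ≤ m / a :=
    Nat.add_div_le_div_of_sq_le ha (by omega) hab hmn (Nat.dvd_add hbm hbn)
  have hpow : m * n ^ (n / a - n / b) ≤ m ^ (n / a - n / b) :=
    Nat.mul_pow_le_pow_of_sq_le (by omega) hgap hmn
  have hkey : m * (n / a) ^ (n / a - n / b) < (m / a + 1) ^ (n / a - n / b) :=
    (Nat.mul_div_pow_le_div_pow ha ham han hpow).trans_lt
      (Nat.pow_lt_pow_left (Nat.lt_succ_self _) (by omega))
  rw [Nat.add_div_of_dvd_right hbm] at hBA ⊢
  rw [Nat.add_div_of_dvd_right ham, Nat.choose_symm_add, Nat.choose_symm_add]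
  obtain ⟨k, hk⟩ : ∃ k, n / a = n / b + k := ⟨_, (Nat.add_sub_of_le (by omega)).symm⟩
  rw [hk] at hkey ⊢
  rw [Nat.add_sub_cancel_left] at hkey
  exact Nat.mul_choose_add_lt_choose_add hBA hkey

theorem stmt_17 (m n a b : ℕ) (hm : 0 < m) (hn : 0 < n) (ha : 2 ≤ a) (hab : a < b)
    (ham : a ∣ Nat.gcd m n) (hbm : b ∣ Nat.gcd m n)
    (hgap : 2 ≤ n / a - n / b) (hmn : n ^ 2 ≤ m) :
    m * Nat.choose ((m + n) / b) (m / b) < Nat.choose ((m + n) / a) (m / a) :=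
  stmt_17_general m n a b hab ham hbm hgap hmn
end

section
/- Let m, n, a, b be positive integers with 2 ≤ a < b, a | gcd(m,n), b | gcd(m,n), and m ≥ n². Then C((m+n)/a; m/a) > n · C((m+n)/b; m/b). -/
theorem stmt_18 (m n a b : ℕ) (hm : 0 < m) (hn : 0 < n) (ha : 2 ≤ a) (hab : a < b)
    (ham : a ∣ Nat.gcd m n) (hbm : b ∣ Nat.gcd m n) (hmn : n ^ 2 ≤ m) :
    n * Nat.choose ((m + n) / b) (m / b) < Nat.choose ((m + n) / a) (m / a) := by
  have ha0 : 0 < a := by omega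
  have hb0 : 0 < b := by omega
  obtain ⟨u, hu⟩ := ham.trans (Nat.gcd_dvd_left m n)
  obtain ⟨v, hv⟩ := ham.trans (Nat.gcd_dvd_right m n)
  obtain ⟨U, hU⟩ := hbm.trans (Nat.gcd_dvd_left m n)
  obtain ⟨V, hV⟩ := hbm.trans (Nat.gcd_dvd_right m n)
  have hma : m / a = u := by rw [hu, Nat.mul_div_cancel_left _ ha0]
  have hmb : m / b = U := by rw [hU, Nat.mul_div_cancel_left _ hb0]
  have hmna : (m + n) / a = u + v := by
    rw [hu, hv, ← Nat.mul_add, Nat.mul_div_cancel_left _ ha0]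
  have hmnb : (m + n) / b = U + V := by
    rw [hU, hV, ← Nat.mul_add, Nat.mul_div_cancel_left _ hb0]
  rw [hma, hmb, hmna, hmnb]
  -- basic positivity
  have hV1 : 1 ≤ V := by nlinarith
  -- v ≥ V + 1
  have hvV : V + 1 ≤ v := by nlinarith
  -- U ≥ n * V
  have hUnV : n * V ≤ U := by
    have h : b * (n * V) ≤ b * U := by
      calc b * (n * V) = n * (b * V) := by ring
        _ = n * n := by rw [← hV]
        _ = n ^ 2 := (sq n).symm
        _ ≤ m := hmn
        _ = b * U := hU
    exact Nat.le_of_mul_le_mul_left h hb0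
  -- u ≥ U + n
  have huU : U + n ≤ u := by
    have key : a * n + a * b ≤ b * n := by
      calc a * n + a * b = a * (b * V) + a * b := by rw [hV]
        _ = a * b * (V + 1) := by ring
        _ ≤ a * b * v := Nat.mul_le_mul_left _ hvV
        _ = b * (a * v) := by ring
        _ = b * n := by rw [← hv]
    have key2 : a * b * (U + n) ≤ a * b * u := by
      obtain ⟨c, hc⟩ := Nat.exists_eq_add_of_le hmn
      have f1 : (a * n + a * b) * n ≤ b * n * n := Nat.mul_le_mul_right n key
      have f2 : a * c ≤ b * c := Nat.mul_le_mul_right c hab.le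
      have e_left : a * b * (U + n) = a * m + a * b * n := by rw [hU]; ring
      have e_right : a * b * u = b * m := by rw [hu]; ring
      rw [e_left, e_right, hc]
      nlinarith [f1, f2]
    exact Nat.le_of_mul_le_mul_left key2 (by positivity)
  -- symmetry of binomials
  have symm : ∀ x y : ℕ, Nat.choose (x + y) x = Nat.choose (x + y) y := by
    intro x y
    rw [← Nat.choose_symm (Nat.le_add_right x y), Nat.add_sub_cancel_left]
  set M := U + n with hM
  set A := M + (V + 1) with hA
  -- chain: C(u+v, u) = C(u+v, v) ≥ C(M+v, v) = C(M+v, M) ≥ C(A, M) = C(A, V+1)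
  have c1 : Nat.choose A (V + 1) ≤ Nat.choose (u + v) u := by
    rw [symm u v]
    calc Nat.choose A (V + 1) = Nat.choose A M := (symm M (V + 1)).symm
    _ ≤ Nat.choose (M + v) M := Nat.choose_le_choose M (by omega)
    _ = Nat.choose (M + v) v := symm M v
    _ ≤ Nat.choose (u + v) v := Nat.choose_le_choose v (by omega)
  -- final step
  have hpos : 0 < Nat.choose (U + V) V := Nat.choose_pos (Nat.le_add_left V U)
  have c2 : n * Nat.choose (U + V) V < Nat.choose A (V + 1) := by
    have e1 : Nat.choose A (V + 1) * (V + 1) = Nat.choose A V * (A - V) :=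
      Nat.choose_succ_right_eq A V
    have e2 : A - V = U + n + 1 := by omega
    have e3 : Nat.choose (U + V) V ≤ Nat.choose A V := Nat.choose_le_choose V (by omega)
    have key : (n * Nat.choose (U + V) V) * (V + 1) < Nat.choose A (V + 1) * (V + 1) := by
      rw [e1, e2]
      calc n * Nat.choose (U + V) V * (V + 1)
          = Nat.choose (U + V) V * (n * V + n) := by ring
        _ < Nat.choose (U + V) V * (U + n + 1) := by
            exact mul_lt_mul_of_pos_left (by omega) hpos
        _ ≤ Nat.choose A V * (U + n + 1) := Nat.mul_le_mul_right _ e3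
    exact Nat.lt_of_mul_lt_mul_right key
  -- combine
  rw [symm U V]
  exact lt_of_lt_of_le c2 c1
end
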